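/- arXiv:1512.01710 — 4 statements merged into one kernel-verified Lean document; each statement's English description precedes it below -/
import Mathlib

section
/- The map X : ℝ² → ℝ², X(a₁,a₂) = (X₁(a₁,a₂), X₂(a₁,a₂)), is differentiable, and for every (a₁,a₂) ∈ ℝ² the absolute value of the determinant of its Jacobian matrix at (a₁,a₂) equals 2π²·|S_ρ(a₁,a₂)|, where |·| denotes the complex absolute value. -/
open Real

noncomputable section

/-- `X₁` for `A₂`. -/
def X1 (a : ℝ × ℝ) : ℝ :=
  Real.cos (2 * π * a.1) + Real.cos (2 * π * a.2) + Real.cos (2 * π * (a.1 - a.2))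

/-- `X₂` for `A₂`. -/
def X2 (a : ℝ × ℝ) : ℝ :=
  Real.sin (2 * π * a.1) - Real.sin (2 * π * a.2) - Real.sin (2 * π * (a.1 - a.2))

/-- The `X`-transform of `A₂`. -/
def Xmap (a : ℝ × ℝ) : ℝ × ℝ := (X1 a, X2 a)

/-- The lowest antisymmetric orbit function `S_ρ` of `A₂`. -/
def Srho (a : ℝ × ℝ) : ℂ :=
  Complex.exp (2 * π * Complex.I * (a.1 + a.2)) -
  Complex.exp (2 * π * Complex.I * (-a.1 + 2 * a.2)) -
  Complex.exp (2 * π * Complex.I * (2 * a.1 - a.2)) +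
  Complex.exp (2 * π * Complex.I * (a.1 - 2 * a.2)) +
  Complex.exp (2 * π * Complex.I * (-2 * a.1 + a.2)) -
  Complex.exp (2 * π * Complex.I * (-a.1 - a.2))

/-!
The Jacobian entries of `X` are `±2π` times sines and cosines of the phases `u = 2πa₁`,
`v = 2πa₂`, `w = 2π(a₁ - a₂)`; by the addition theorems its determinant collapses to
`4π² (sin (u + v) + sin (w - v) - sin (u + w))`. Pairing the six exponentials of `S_ρ` into
conjugate pairs `e^{iθ} - e^{-iθ} = 2i sin θ` shows that `S_ρ` is `2i` times the same sine sum.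
-/

open ContinuousLinearMap

theorem LinearMap.det_prod_self {R : Type*} [CommRing R] (f : R × R →ₗ[R] R × R) :
    f.det = (f (1, 0)).1 * (f (0, 1)).2 - (f (0, 1)).1 * (f (1, 0)).2 := by
  rw [← LinearMap.det_toMatrix (Module.Basis.finTwoProd R), Matrix.det_fin_two]
  simp [LinearMap.toMatrix_apply]

theorem Complex.exp_mul_I_sub_exp_neg_mul_I (z : ℂ) :
    Complex.exp (z * Complex.I) - Complex.exp (-z * Complex.I) =
      2 * Complex.sin z * Complex.I := by
  linear_combination (-Complex.I) * Complex.two_sin z +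
    (Complex.exp (z * Complex.I) - Complex.exp (-z * Complex.I)) * Complex.I_sq

theorem sin_cos_cross_eq (u v w : ℝ) :
    (sin u + sin w) * (cos v - cos w) + (sin v - sin w) * (cos u - cos w) =
      sin (u + v) + sin (w - v) - sin (u + w) := by
  rw [sin_add, sin_sub, sin_add]
  ring

theorem hasFDerivAt_X1 (a : ℝ × ℝ) :
    HasFDerivAt X1 (-sin (2 * π * a.1) • (2 * π) • fst ℝ ℝ ℝ
      + -sin (2 * π * a.2) • (2 * π) • snd ℝ ℝ ℝ
      + -sin (2 * π * (a.1 - a.2)) • (2 * π) • (fst ℝ ℝ ℝ - snd ℝ ℝ ℝ)) a := by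
  unfold X1
  exact ((hasFDerivAt_fst.const_mul _).cos.add (hasFDerivAt_snd.const_mul _).cos).add
    ((hasFDerivAt_fst.sub hasFDerivAt_snd).const_mul _).cos

theorem hasFDerivAt_X2 (a : ℝ × ℝ) :
    HasFDerivAt X2 (cos (2 * π * a.1) • (2 * π) • fst ℝ ℝ ℝ
      - cos (2 * π * a.2) • (2 * π) • snd ℝ ℝ ℝ
      - cos (2 * π * (a.1 - a.2)) • (2 * π) • (fst ℝ ℝ ℝ - snd ℝ ℝ ℝ)) a := by
  unfold X2
  exact ((hasFDerivAt_fst.const_mul _).sin.sub (hasFDerivAt_snd.const_mul _).sin).sub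
    ((hasFDerivAt_fst.sub hasFDerivAt_snd).const_mul _).sin

theorem hasFDerivAt_Xmap (a : ℝ × ℝ) :
    HasFDerivAt Xmap ((fderiv ℝ X1 a).prod (fderiv ℝ X2 a)) a :=
  (hasFDerivAt_X1 a).differentiableAt.hasFDerivAt.prodMk
    (hasFDerivAt_X2 a).differentiableAt.hasFDerivAt

def srhoSin (a : ℝ × ℝ) : ℝ :=
  sin (2 * π * (a.1 + a.2)) + sin (2 * π * (a.1 - 2 * a.2)) - sin (2 * π * (2 * a.1 - a.2))

theorem det_fderiv_Xmap (a : ℝ × ℝ) : (fderiv ℝ Xmap a).det = 4 * π ^ 2 * srhoSin a := by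
  rw [(hasFDerivAt_Xmap a).fderiv, ContinuousLinearMap.det, LinearMap.det_prod_self,
    (hasFDerivAt_X1 a).fderiv, (hasFDerivAt_X2 a).fderiv, srhoSin,
    show 2 * π * (a.1 - 2 * a.2) = 2 * π * (a.1 - a.2) - 2 * π * a.2 by ring,
    show 2 * π * (2 * a.1 - a.2) = 2 * π * a.1 + 2 * π * (a.1 - a.2) by ring, mul_add,
    ← sin_cos_cross_eq]
  simp only [coe_prod, toLinearMap_add, toLinearMap_smul, toLinearMap_sub, coe_fst, coe_snd,
    neg_smul, LinearMap.prod_apply, Function.prod_apply, LinearMap.add_apply, LinearMap.neg_apply,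
    LinearMap.smul_apply, LinearMap.sub_apply, LinearMap.fst_apply, LinearMap.snd_apply,
    smul_eq_mul, mul_one, mul_zero, neg_zero, add_zero, sub_zero, zero_add, zero_sub, mul_neg,
    neg_neg, sub_neg_eq_add]
  ring

theorem Srho_eq (a : ℝ × ℝ) : Srho a = 2 * srhoSin a * Complex.I := by
  have exp_sub_exp_neg (x : ℝ) :
      Complex.exp (2 * π * Complex.I * x) - Complex.exp (2 * π * Complex.I * (-x)) =
        2 * Real.sin (2 * π * x) * Complex.I := by
    rw [Complex.ofReal_sin, ← Complex.exp_mul_I_sub_exp_neg_mul_I]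
    push_cast
    ring_nf
  rw [Srho, srhoSin]
  linear_combination (norm := skip) exp_sub_exp_neg (a.1 + a.2) + exp_sub_exp_neg (a.1 - 2 * a.2)
    - exp_sub_exp_neg (2 * a.1 - a.2)
  push_cast
  ring_nf

theorem norm_Srho (a : ℝ × ℝ) : ‖Srho a‖ = 2 * |srhoSin a| := by
  simp [Srho_eq]

/-- The `X`-transform of `A₂` is differentiable and the absolute value of
its Jacobian determinant equals `2π²·|S_ρ|`. -/
theorem jacobian_A2 :
    Differentiable ℝ Xmap ∧
    ∀ a : ℝ × ℝ, |(fderiv ℝ Xmap a).det| = 2 * π ^ 2 * ‖Srho a‖ := by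
  refine ⟨fun a => (hasFDerivAt_Xmap a).differentiableAt, fun a => ?_⟩
  rw [det_fderiv_Xmap, norm_Srho, abs_mul, abs_of_nonneg (by positivity)]
  ring

end
end

section
/- For every integer M ≥ 1, the node map of A₂ is injective: for any two distinct triples j = (s₀,s₁,s₂) and j' = (s₀',s₁',s₂') in I_M, the points y^{(j)} and y^{(j')} of ℝ² are distinct. Consequently the set of nodes Ω_M = {y^{(j)} : j ∈ I_M} has exactly |I_M| elements. -/
open Real

noncomputable section

/-- The index set `I_M` of `A₂`. -/
def IM (M : ℕ) : Finset (ℕ × ℕ × ℕ) :=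
  (Finset.range (M + 1) ×ˢ Finset.range (M + 1) ×ˢ Finset.range (M + 1)).filter
    (fun j => j.1 + j.2.1 + j.2.2 = M)

/-- The node `y^{(j)} = X(a^{(j)})` of `A₂`. -/
def node (M : ℕ) (j : ℕ × ℕ × ℕ) : ℝ × ℝ :=
  Xmap (((2 * j.2.1 + j.2.2 : ℕ) : ℝ) / (3 * M), ((j.2.1 + 2 * j.2.2 : ℕ) : ℝ) / (3 * M))

/-!
With `ζ = exp (2πi/(3M))`, the node of `j = (s₀, s₁, s₂)`, read as the complex number
`X₁ + i X₂`, is `ζ^P + ζ^Q + ζ^R` for `P = 2s₁ + s₂`, `Q = -(s₁ + 2s₂)`, `R = s₂ - s₁`.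
As `P + Q + R = 0` and `|ζ| = 1`, the conjugate of this sum is the second elementary symmetric
function of `ζ^P, ζ^Q, ζ^R`, and their product is `1`. So the node determines the multiset
`{ζ^P, ζ^Q, ζ^R}`, that is, the multiset `{P, Q, R}` modulo `3M`. The exponents lie in
`[-2M, 2M]`, so two of them that agree modulo `3M` differ by `0` or `±3M`, and each of the six
ways of matching the two triples then forces `j = j'`.
-/

open Complex ComplexConjugate Polynomial

theorem Multiset.triple_eq_of_esymm_eq {R : Type*} [CommRing R] [IsDomain R]
    {u v w u' v' w' : R} (h₁ : u + v + w = u' + v' + w')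
    (h₂ : u * v + u * w + v * w = u' * v' + u' * w' + v' * w') (h₃ : u * v * w = u' * v' * w') :
    ({u, v, w} : Multiset R) = {u', v', w'} := by
  have roots_eq (a b c : R) : ((X - C a) * (X - C b) * (X - C c)).roots = {a, b, c} := by
    simp [roots_mul, X_sub_C_ne_zero]
  have expand (a b c : R) : (X - C a) * (X - C b) * (X - C c) =
      X ^ 3 - C (a + b + c) * X ^ 2 + C (a * b + a * c + b * c) * X - C (a * b * c) := by
    simp only [C_add, C_mul]
    ring
  rw [← roots_eq, ← roots_eq, expand, expand, h₁, h₂, h₃]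

theorem Multiset.triple_eq_triple_cases {α : Type*} {a b c d e f : α}
    (h : ({a, b, c} : Multiset α) = {d, e, f}) :
    (a = d ∧ b = e ∧ c = f) ∨ (a = e ∧ b = d ∧ c = f) ∨ (a = f ∧ b = e ∧ c = d) ∨
      (a = e ∧ b = f ∧ c = d) ∨ (a = f ∧ b = d ∧ c = e) ∨ (a = d ∧ b = f ∧ c = e) := by
  have : [a, b, c] ∈ List.permutations [d, e, f] :=
    List.mem_permutations.mpr (Multiset.coe_eq_coe.mp h)
  simpa [List.permutations, List.permutationsAux, List.permutationsAux.rec,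
    List.permutationsAux2] using this

theorem Int.eq_neg_or_eq_zero_or_eq_of_dvd {n d : ℤ} (hd : n ∣ d) (h₁ : -(3 * n) ≤ 2 * d)
    (h₂ : 2 * d ≤ 3 * n) : d = -n ∨ d = 0 ∨ d = n := by
  obtain ⟨c, rfl⟩ := hd
  obtain rfl | hn : n = 0 ∨ 0 < n := by omega
  · simp
  have hc₁ : c < 2 := by nlinarith
  have hc₂ : -2 < c := by nlinarith
  interval_cases c <;> simp

namespace Complex

theorem conj_zpow_of_norm_eq_one {ζ : ℂ} (hζ : ‖ζ‖ = 1) (k : ℤ) :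
    conj (ζ ^ k) = ζ ^ (-k) := by
  rw [map_zpow₀, ← inv_eq_conj hζ, inv_zpow', zpow_neg]

theorem zpow_triple_eq_of_sum_eq {ζ : ℂ} (hζ : ‖ζ‖ = 1) {P Q R P' Q' R' : ℤ}
    (h : P + Q + R = 0) (h' : P' + Q' + R' = 0)
    (hsum : ζ ^ P + ζ ^ Q + ζ ^ R = ζ ^ P' + ζ ^ Q' + ζ ^ R') :
    ({ζ ^ P, ζ ^ Q, ζ ^ R} : Multiset ℂ) = {ζ ^ P', ζ ^ Q', ζ ^ R'} := by
  have hζ₀ : ζ ≠ 0 := norm_ne_zero_iff.mp (by simp [hζ])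
  have esymm₂ {A B C : ℤ} (hABC : A + B + C = 0) :
      ζ ^ A * ζ ^ B + ζ ^ A * ζ ^ C + ζ ^ B * ζ ^ C = conj (ζ ^ A + ζ ^ B + ζ ^ C) := by
    simp only [map_add, conj_zpow_of_norm_eq_one hζ, ← zpow_add₀ hζ₀]
    rw [show A + B = -C by omega, show A + C = -B by omega, show B + C = -A by omega]
    ring
  have esymm₃ {A B C : ℤ} (hABC : A + B + C = 0) : ζ ^ A * ζ ^ B * ζ ^ C = 1 := by
    rw [← zpow_add₀ hζ₀, ← zpow_add₀ hζ₀, hABC, zpow_zero]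
  exact Multiset.triple_eq_of_esymm_eq hsum (by rw [esymm₂ h, esymm₂ h', hsum])
    (by rw [esymm₃ h, esymm₃ h'])

theorem exp_two_pi_I_div_zpow (n : ℕ) (k : ℤ) {θ : ℝ} (hθ : θ = 2 * π * k / n) :
    exp (2 * π * I / n) ^ k = (Real.cos θ : ℂ) + Real.sin θ * I := by
  rw [← exp_int_mul, ofReal_cos, ofReal_sin, ← exp_mul_I, hθ]
  push_cast
  ring_nf

end Complex

theorem node_eq_sum_zpow (M s₀ s₁ s₂ : ℕ) :
    ((node M (s₀, s₁, s₂)).1 : ℂ) + (node M (s₀, s₁, s₂)).2 * I =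
      exp (2 * π * I / (3 * M : ℕ)) ^ (2 * s₁ + s₂ : ℤ) +
        exp (2 * π * I / (3 * M : ℕ)) ^ (-(s₁ + 2 * s₂) : ℤ) +
          exp (2 * π * I / (3 * M : ℕ)) ^ (s₂ - s₁ : ℤ) := by
  simp only [node, Xmap, X1, X2]
  set a₁ : ℝ := ((2 * s₁ + s₂ : ℕ) : ℝ) / (3 * M)
  set a₂ : ℝ := ((s₁ + 2 * s₂ : ℕ) : ℝ) / (3 * M)
  rw [exp_two_pi_I_div_zpow _ _ (θ := 2 * π * a₁) (by simp [a₁]; ring),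
    exp_two_pi_I_div_zpow _ _ (θ := -(2 * π * a₂)) (by simp [a₂]; ring),
    exp_two_pi_I_div_zpow _ _ (θ := -(2 * π * (a₁ - a₂))) (by simp [a₁, a₂]; ring)]
  simp only [Real.cos_neg, Real.sin_neg]
  push_cast
  ring

theorem eq_of_exponent_triples_congr {α : Type*} {n : ℕ} {f : ℤ → α}
    (hf : ∀ k l, f k = f l → (3 * n : ℤ) ∣ k - l) {s₁ s₂ t₁ t₂ : ℕ}
    (hs : s₁ + s₂ ≤ n) (ht : t₁ + t₂ ≤ n)
    (h : ({f (2 * s₁ + s₂), f (-(s₁ + 2 * s₂)), f (s₂ - s₁)} : Multiset α) =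
      {f (2 * t₁ + t₂), f (-(t₁ + 2 * t₂)), f (t₂ - t₁)}) :
    s₁ = t₁ ∧ s₂ = t₂ := by
  have close {k l : ℤ} (hkl : f k = f l) (h₁ : -(3 * (3 * n)) ≤ 2 * (k - l))
      (h₂ : 2 * (k - l) ≤ 3 * (3 * n)) : k - l = -(3 * n) ∨ k - l = 0 ∨ k - l = 3 * n :=
    Int.eq_neg_or_eq_zero_or_eq_of_dvd (hf k l hkl) h₁ h₂
  rcases Multiset.triple_eq_triple_cases h with
    ⟨hP, hQ, hR⟩ | ⟨hP, hQ, hR⟩ | ⟨hP, hQ, hR⟩ | ⟨hP, hQ, hR⟩ | ⟨hP, hQ, hR⟩ | ⟨hP, hQ, hR⟩ <;>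
  · have := close hP (by omega) (by omega)
    have := close hQ (by omega) (by omega)
    have := close hR (by omega) (by omega)
    omega

theorem eq_of_node_eq {M : ℕ} (hM : 1 ≤ M) {s₀ s₁ s₂ t₀ t₁ t₂ : ℕ}
    (hs : s₀ + s₁ + s₂ = M) (ht : t₀ + t₁ + t₂ = M)
    (h : node M (s₀, s₁, s₂) = node M (t₀, t₁, t₂)) : (s₀, s₁, s₂) = (t₀, t₁, t₂) := by
  set ζ := exp (2 * π * I / (3 * M : ℕ))
  have hζ : IsPrimitiveRoot ζ (3 * M) := isPrimitiveRoot_exp _ (by omega)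
  have hζ₀ : ζ ≠ 0 := exp_ne_zero _
  have hsum := (node_eq_sum_zpow M s₀ s₁ s₂).symm.trans (h ▸ node_eq_sum_zpow M t₀ t₁ t₂)
  have hζ_congr (k l : ℤ) (hkl : ζ ^ k = ζ ^ l) : (3 * M : ℤ) ∣ k - l := by
    have hζ_sub : ζ ^ (k - l) = 1 := by rw [zpow_sub₀ hζ₀, hkl, div_self (zpow_ne_zero _ hζ₀)]
    exact_mod_cast (hζ.zpow_eq_one_iff_dvd (k - l)).mp hζ_sub
  obtain ⟨rfl, rfl⟩ := eq_of_exponent_triples_congr hζ_congr (by omega) (by omega)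
    (zpow_triple_eq_of_sum_eq (hζ.norm'_eq_one (by omega)) (by ring) (by ring) hsum)
  obtain rfl : s₀ = t₀ := by omega
  rfl

/-- The node map of `A₂` is injective on `I_M`; consequently the set of
nodes `Ω_M` has exactly `|I_M|` elements. -/
theorem node_map_injective (M : ℕ) (hM : 1 ≤ M) :
    (∀ j ∈ IM M, ∀ j' ∈ IM M, j ≠ j' → node M j ≠ node M j') ∧
    ((IM M).image (node M)).card = (IM M).card := by
  have inj : ∀ j ∈ IM M, ∀ j' ∈ IM M, j ≠ j' → node M j ≠ node M j' := by
    rintro ⟨s₀, s₁, s₂⟩ hj ⟨t₀, t₁, t₂⟩ hj' hne h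
    exact hne (eq_of_node_eq hM (Finset.mem_filter.mp hj).2 (Finset.mem_filter.mp hj').2 h)
  exact ⟨inj, Finset.card_image_of_injOn fun j hj j' hj' h ↦
    by_contra fun hne ↦ inj j hj j' hj' hne h⟩

end
end

section
/- There exists a set N ⊆ T of two-dimensional Lebesgue measure zero such that the map X is injective on T ∖ N, i.e. for all (a₁,a₂), (b₁,b₂) ∈ T ∖ N, X(a₁,a₂) = X(b₁,b₂) implies (a₁,a₂) = (b₁,b₂). -/
open MeasureTheory Real

noncomputable section

/-- The fundamental domain `T` of the affine Weyl group of `A₂` in coroot coordinates. -/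
def T : Set (ℝ × ℝ) :=
  {a | 0 ≤ 2 * a.1 - a.2 ∧ 0 ≤ 2 * a.2 - a.1 ∧ a.1 + a.2 ≤ 1}

/-!
Write `e(t) = exp(2πit)`. Then `X₁ + i X₂ = z₁ + z₂ + z₃` for the phases
`z = (e(a₁), e(-a₂), e(a₂ - a₁))`. These are unit complex numbers with product `1`, so `z₁ z₂ = z̄₃`
etc., and they are the roots of `u³ - s u² + s̄ u - 1` with `s = X₁ + i X₂`. Hence `X` determines
`a₁, -a₂, a₂ - a₁` up to permutation and integer shifts. On the interior of `T` the lifts satisfy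
`a₁ > a₂ - a₁ > -a₂ > a₁ - 1`, which leaves room for neither, and the boundary of `T` consists of
three segments, a null set.
-/

open scoped FourierTransform ComplexConjugate

lemma Real.fourierChar_eq_fourierChar_iff {x y : ℝ} : 𝐞 x = 𝐞 y ↔ ∃ m : ℤ, x = y + m := by
  rw [fourierChar_apply', fourierChar_apply', Circle.exp_eq_exp]
  refine exists_congr fun m ↦ ⟨fun h ↦ ?_, fun h ↦ by rw [h]; ring⟩
  nlinarith [pi_pos]

lemma Int.cast_le_neg_one_or_eq_zero_or_one_le {R : Type*} [Ring R] [LinearOrder R]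
    [IsStrictOrderedRing R] (n : ℤ) : (n : R) ≤ -1 ∨ (n : R) = 0 ∨ 1 ≤ (n : R) := by
  rcases lt_trichotomy n 0 with h | rfl | h
  · exact .inl (Int.cast_le_neg_one_of_neg h)
  · exact .inr (.inl Int.cast_zero)
  · exact .inr (.inr (Int.cast_one_le_of_pos h))

lemma Real.fourierChar_mul_mul_eq_one {x y z : ℝ} (h : x + y + z = 0) : 𝐞 x * 𝐞 y * 𝐞 z = 1 := by
  rw [← AddChar.map_add_eq_mul, ← AddChar.map_add_eq_mul, h, AddChar.map_zero_eq_one]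

namespace Circle

lemma prod_sub_eq_of_mul_mul_eq_one {z₁ z₂ z₃ : Circle} (h : z₁ * z₂ * z₃ = 1) (u : ℂ) :
    (u - z₁) * (u - z₂) * (u - z₃) =
      u ^ 3 - (z₁ + z₂ + z₃ : ℂ) * u ^ 2 + conj (z₁ + z₂ + z₃ : ℂ) * u - 1 := by
  have h₁₂ : z₁ * z₂ = z₃⁻¹ := eq_inv_of_mul_eq_one_left h
  have h₁₃ : z₁ * z₃ = z₂⁻¹ := eq_inv_of_mul_eq_one_left ((mul_right_comm _ _ _).trans h)
  have h₂₃ : z₂ * z₃ = z₁⁻¹ := eq_inv_of_mul_eq_one_left (by rw [mul_comm, ← mul_assoc, h])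
  have h₁₂₃ : (z₁ * z₂ * z₃ : ℂ) = 1 := by rw [← coe_mul, ← coe_mul, h, coe_one]
  have e₂ : (z₁ * z₂ + z₁ * z₃ + z₂ * z₃ : ℂ) = conj (z₁ + z₂ + z₃ : ℂ) := by
    simp only [map_add, ← coe_inv_eq_conj, ← coe_mul, h₁₂, h₁₃, h₂₃]
    ring
  linear_combination u * e₂ - h₁₂₃

lemma eq_or_eq_or_eq_of_sum_eq {z₁ z₂ z₃ w₁ w₂ w₃ : Circle} (hz : z₁ * z₂ * z₃ = 1)
    (hw : w₁ * w₂ * w₃ = 1) (hsum : (z₁ + z₂ + z₃ : ℂ) = w₁ + w₂ + w₃) {z : Circle}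
    (hmem : z = z₁ ∨ z = z₂ ∨ z = z₃) : z = w₁ ∨ z = w₂ ∨ z = w₃ := by
  have hroot : ((z : ℂ) - z₁) * (z - z₂) * (z - z₃) = 0 := by
    rcases hmem with rfl | rfl | rfl <;> ring
  rw [prod_sub_eq_of_mul_mul_eq_one hz, hsum, ← prod_sub_eq_of_mul_mul_eq_one hw] at hroot
  simpa only [mul_eq_zero, sub_eq_zero, coe_inj, or_assoc] using hroot

end Circle

lemma X1_add_X2_mul_I_eq (a : ℝ × ℝ) :
    (X1 a + X2 a * Complex.I : ℂ) = 𝐞 a.1 + 𝐞 (-a.2) + 𝐞 (a.2 - a.1) := by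
  have hneg₂ : 2 * π * -a.2 = -(2 * π * a.2) := by ring
  have hneg₃ : 2 * π * (a.2 - a.1) = -(2 * π * (a.1 - a.2)) := by ring
  apply Complex.ext <;>
  simp only [fourierChar_apply, Complex.add_re, Complex.add_im, Complex.mul_re, Complex.mul_im,
    Complex.ofReal_re, Complex.ofReal_im, Complex.I_re, Complex.I_im, Complex.exp_ofReal_mul_I_re,
    Complex.exp_ofReal_mul_I_im, hneg₂, hneg₃, cos_neg, sin_neg, X1, X2] <;>
  ring

def openAlcove : Set (ℝ × ℝ) :=
  {a | 0 < 2 * a.1 - a.2 ∧ 0 < 2 * a.2 - a.1 ∧ a.1 + a.2 < 1}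

lemma eq_of_mem_openAlcove {a b : ℝ × ℝ} (ha : a ∈ openAlcove) (hb : b ∈ openAlcove)
    (h₁ : 𝐞 a.1 = 𝐞 b.1 ∨ 𝐞 a.1 = 𝐞 (-b.2) ∨ 𝐞 a.1 = 𝐞 (b.2 - b.1))
    (h₂ : 𝐞 (-a.2) = 𝐞 b.1 ∨ 𝐞 (-a.2) = 𝐞 (-b.2) ∨ 𝐞 (-a.2) = 𝐞 (b.2 - b.1)) : a = b := by
  obtain ⟨ha₁, ha₂, ha₃⟩ := ha
  obtain ⟨hb₁, hb₂, hb₃⟩ := hb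
  simp only [fourierChar_eq_fourierChar_iff] at h₁ h₂
  rcases h₁ with ⟨m, h₁⟩ | ⟨m, h₁⟩ | ⟨m, h₁⟩ <;> rcases h₂ with ⟨n, h₂⟩ | ⟨n, h₂⟩ | ⟨n, h₂⟩ <;>
    rcases Int.cast_le_neg_one_or_eq_zero_or_one_le (R := ℝ) m with hm | hm | hm <;>
    rcases Int.cast_le_neg_one_or_eq_zero_or_one_le (R := ℝ) n with hn | hn | hn <;>
    exact Prod.ext (by linarith) (by linarith)

lemma injOn_Xmap_openAlcove : Set.InjOn Xmap openAlcove := by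
  intro a ha b hb hab
  have hsum : (𝐞 a.1 + 𝐞 (-a.2) + 𝐞 (a.2 - a.1) : ℂ) = 𝐞 b.1 + 𝐞 (-b.2) + 𝐞 (b.2 - b.1) := by
    rw [← X1_add_X2_mul_I_eq, ← X1_add_X2_mul_I_eq]
    simp only [Xmap, Prod.mk.injEq] at hab
    rw [hab.1, hab.2]
  have hroot {z : Circle} := Circle.eq_or_eq_or_eq_of_sum_eq (z := z)
    (fourierChar_mul_mul_eq_one (by ring)) (fourierChar_mul_mul_eq_one (by ring)) hsum
  exact eq_of_mem_openAlcove ha hb (hroot (.inl rfl)) (hroot (.inr (.inl rfl)))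

theorem MeasureTheory.Measure.addHaar_setOf_eq_eq_zero {E : Type*} [NormedAddCommGroup E]
    [NormedSpace ℝ E] [MeasurableSpace E] [BorelSpace E] [FiniteDimensional ℝ E] (μ : Measure E)
    [μ.IsAddHaarMeasure] {f : E →ₗ[ℝ] ℝ} (hf : f ≠ 0) (c : ℝ) : μ {x | f x = c} = 0 := by
  obtain ⟨v, hv⟩ := DFunLike.ne_iff.mp hf
  set p := (c / f v) • v
  have hfp : f p = c := by simp [p, div_mul_cancel₀ _ hv]
  have hlevel : {x | f x = c} = (· + -p) ⁻¹' (LinearMap.ker f : Set E) := by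
    ext x
    simp [hfp, add_neg_eq_zero]
  rw [hlevel, measure_preimage_add_right]
  exact Measure.addHaar_submodule μ _ (mt LinearMap.ker_eq_top.mp hf)

lemma volume_T_diff_openAlcove : volume (T \ openAlcove) = 0 := by
  let f₁ : ℝ × ℝ →ₗ[ℝ] ℝ := (2 : ℝ) • LinearMap.fst ℝ ℝ ℝ - LinearMap.snd ℝ ℝ ℝ
  let f₂ : ℝ × ℝ →ₗ[ℝ] ℝ := (2 : ℝ) • LinearMap.snd ℝ ℝ ℝ - LinearMap.fst ℝ ℝ ℝ
  let f₃ : ℝ × ℝ →ₗ[ℝ] ℝ := LinearMap.fst ℝ ℝ ℝ + LinearMap.snd ℝ ℝ ℝ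
  have hsub : T \ openAlcove ⊆ {x | f₁ x = 0} ∪ {x | f₂ x = 0} ∪ {x | f₃ x = 1} := by
    rintro x ⟨⟨h₁, h₂, h₃⟩, hx⟩
    simp only [openAlcove, Set.mem_ofPred_eq, not_and_or, not_lt] at hx
    simp only [Set.mem_union, Set.mem_ofPred_eq, f₁, f₂, f₃, LinearMap.sub_apply,
      LinearMap.add_apply, LinearMap.smul_apply, smul_eq_mul, LinearMap.fst_apply,
      LinearMap.snd_apply]
    rcases hx with hx | hx | hx
    · exact .inl (.inl (by linarith))
    · exact .inl (.inr (by linarith))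
    · exact .inr (by linarith)
  have hne {f : ℝ × ℝ →ₗ[ℝ] ℝ} (v : ℝ × ℝ) (hv : f v ≠ 0) : f ≠ 0 := fun h ↦ hv (by simp [h])
  refine measure_mono_null hsub (measure_union_null (measure_union_null ?_ ?_) ?_) <;>
    refine Measure.addHaar_setOf_eq_eq_zero _ (hne (1, 0) ?_) _ <;> simp [f₁, f₂, f₃]

/-- The `X`-transform of `A₂` is injective on the fundamental domain `T`
up to a set of Lebesgue measure zero. -/
theorem Xmap_ae_injective :
    ∃ N : Set (ℝ × ℝ), N ⊆ T ∧ volume N = 0 ∧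
      ∀ a ∈ T \ N, ∀ b ∈ T \ N, Xmap a = Xmap b → a = b := by
  refine ⟨T \ openAlcove, Set.sdiff_subset, volume_T_diff_openAlcove, ?_⟩
  rw [Set.sdiff_sdiff_right_self]
  exact fun a ha b hb ↦ injOn_Xmap_openAlcove ha.2 hb.2

end
end

section
/- The image of the fundamental domain T under the map X equals Ω, i.e. X(T) = {(y₁,y₂) ∈ ℝ² : −(y₁² + y₂² + 9)² + 8(y₁³ − 3y₁y₂²) + 108 ≥ 0}. -/
/-!
Every point of the plane can be written as `y = μ e^{-it} + e^{2it}` with `μ, t` real (choose `t`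
by the intermediate value theorem), and in these coordinates the quartic defining `Ω` factors as
`(4 - μ²) (2 cos 3t - μ)²`. So `y ∈ Ω` exactly when `μ = 2 cos ψ`, i.e. when
`y = e^{i(ψ - t)} + e^{2it} + e^{-i(ψ + t)}` is a sum of three unit complex numbers with
product `1`; `X a` is such a sum. Conversely, three angles summing to `0` can be moved, by shifts
by `2π` and permutations, to a triple `B₃ ≤ B₂ ≤ B₁` with `B₁ - B₃ ≤ 2π`, and such a triple is
`(2π a₁, 2π (a₂ - a₁), -2π a₂)` for a point `a ∈ T`.
-/

open Real

noncomputable section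

open Set

def trigSum (θ₁ θ₂ θ₃ : ℝ) : ℝ × ℝ :=
  (cos θ₁ + cos θ₂ + cos θ₃, sin θ₁ + sin θ₂ + sin θ₃)

lemma trigSum_left_comm (θ₁ θ₂ θ₃ : ℝ) : trigSum θ₂ θ₁ θ₃ = trigSum θ₁ θ₂ θ₃ := by
  simp only [trigSum, Prod.mk.injEq]
  constructor <;> ring

lemma trigSum_right_comm (θ₁ θ₂ θ₃ : ℝ) : trigSum θ₁ θ₃ θ₂ = trigSum θ₁ θ₂ θ₃ := by
  simp only [trigSum, Prod.mk.injEq]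
  constructor <;> ring

lemma trigSum_sub_int_mul_two_pi (θ₁ θ₂ θ₃ : ℝ) (n₁ n₂ n₃ : ℤ) :
    trigSum (θ₁ - n₁ * (2 * π)) (θ₂ - n₂ * (2 * π)) (θ₃ - n₃ * (2 * π)) =
      trigSum θ₁ θ₂ θ₃ := by
  simp only [trigSum, cos_sub_int_mul_two_pi, sin_sub_int_mul_two_pi]

lemma Xmap_eq_trigSum (a : ℝ × ℝ) :
    Xmap a = trigSum (2 * π * a.1) (2 * π * (a.2 - a.1)) (-(2 * π * a.2)) := by
  rw [show 2 * π * (a.2 - a.1) = -(2 * π * (a.1 - a.2)) by ring]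
  simp only [Xmap, X1, X2, trigSum, cos_neg, sin_neg, Prod.mk.injEq]
  constructor <;> ring

lemma exists_mem_T_Xmap_eq_of_sorted {B₁ B₂ B₃ : ℝ} (h₂₁ : B₂ ≤ B₁) (h₃₂ : B₃ ≤ B₂)
    (hspread : B₁ - B₃ ≤ 2 * π) (hsum : B₁ + B₂ + B₃ = 0) :
    ∃ a ∈ T, Xmap a = trigSum B₁ B₂ B₃ := by
  refine ⟨(B₁ / (2 * π), -B₃ / (2 * π)), ?_, ?_⟩
  · refine ⟨?_, ?_, ?_⟩
    all_goals field_simp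
    all_goals linarith
  · rw [Xmap_eq_trigSum]
    congr 1
    all_goals field_simp
    all_goals linarith

lemma exists_mem_T_Xmap_eq_of_sorted_of_sum_eq (m : ℕ) {x₁ x₂ x₃ : ℝ} (h₂₁ : x₂ ≤ x₁)
    (h₃₂ : x₃ ≤ x₂) (hspread : x₁ - x₃ ≤ 2 * π) (hsum : x₁ + x₂ + x₃ = m * (2 * π)) :
    ∃ a ∈ T, Xmap a = trigSum x₁ x₂ x₃ := by
  induction m generalizing x₁ x₂ x₃ with
  | zero => exact exists_mem_T_Xmap_eq_of_sorted h₂₁ h₃₂ hspread (by simpa using hsum)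
  | succ m ih =>
    -- the shift `(x₁, x₂, x₃) ↦ (x₂, x₃, x₁ - 2π)` keeps the triple sorted with spread `≤ 2π`
    obtain ⟨a, ha, hXa⟩ := ih (x₃ := x₁ - 2 * π) h₃₂ (by linarith) (by linarith)
      (by push_cast at hsum; linarith)
    refine ⟨a, ha, hXa.trans ?_⟩
    rw [trigSum_right_comm, trigSum_left_comm]
    simp only [trigSum, cos_sub_two_pi, sin_sub_two_pi]

lemma exists_mem_T_Xmap_eq_of_mem_Ico (m : ℤ) {x₁ x₂ x₃ : ℝ} (h₁ : x₁ ∈ Ico 0 (2 * π))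
    (h₂ : x₂ ∈ Ico 0 (2 * π)) (h₃ : x₃ ∈ Ico 0 (2 * π)) (hsum : x₁ + x₂ + x₃ = m * (2 * π)) :
    ∃ a ∈ T, Xmap a = trigSum x₁ x₂ x₃ := by
  wlog h₂₁ : x₂ ≤ x₁ generalizing x₁ x₂
  · have := this h₂ h₁ (by linarith) (by linarith)
    rwa [trigSum_left_comm] at this
  wlog h₃₁ : x₃ ≤ x₁ generalizing x₁ x₃
  · have := this h₁ h₃ (by linarith) (by linarith) (by linarith)
    rwa [trigSum_right_comm, trigSum_left_comm, trigSum_right_comm] at this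
  wlog h₃₂ : x₃ ≤ x₂ generalizing x₂ x₃
  · have := this h₃ h₂ (by linarith) (by linarith) (by linarith) (by linarith)
    rwa [trigSum_right_comm] at this
  lift m to ℕ using by
    have : (0 : ℝ) ≤ m * (2 * π) := by linarith [h₁.1, h₂.1, h₃.1]
    exact_mod_cast nonneg_of_mul_nonneg_left this (by positivity)
  exact exists_mem_T_Xmap_eq_of_sorted_of_sum_eq m h₂₁ h₃₂ (by linarith [h₁.2, h₃.1])
    (by exact_mod_cast hsum)

lemma exists_mem_T_Xmap_eq_trigSum {θ₁ θ₂ θ₃ : ℝ} (hsum : θ₁ + θ₂ + θ₃ = 0) :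
    ∃ a ∈ T, Xmap a = trigSum θ₁ θ₂ θ₃ := by
  have reduce (θ : ℝ) : ∃ n : ℤ, θ - n * (2 * π) ∈ Ico 0 (2 * π) := by
    obtain ⟨n, hn, -⟩ := existsUnique_sub_zsmul_mem_Ico two_pi_pos θ 0
    exact ⟨n, by simpa [zsmul_eq_mul] using hn⟩
  obtain ⟨n₁, h₁⟩ := reduce θ₁
  obtain ⟨n₂, h₂⟩ := reduce θ₂
  obtain ⟨n₃, h₃⟩ := reduce θ₃
  rw [← trigSum_sub_int_mul_two_pi θ₁ θ₂ θ₃ n₁ n₂ n₃]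
  exact exists_mem_T_Xmap_eq_of_mem_Ico (-(n₁ + n₂ + n₃)) h₁ h₂ h₃ (by push_cast; linarith)

def deltoidParam (μ t : ℝ) : ℝ × ℝ :=
  (μ * cos t + cos (2 * t), sin (2 * t) - μ * sin t)

lemma trigSum_eq_deltoidParam (ψ t : ℝ) :
    trigSum (ψ - t) (2 * t) (-ψ - t) = deltoidParam (2 * cos ψ) t := by
  rw [show -ψ - t = -(ψ + t) by ring]
  simp only [trigSum, deltoidParam, cos_neg, sin_neg, cos_add, cos_sub, sin_add, sin_sub,
    Prod.mk.injEq]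
  constructor <;> ring

lemma Xmap_eq_deltoidParam (a : ℝ × ℝ) :
    Xmap a = deltoidParam (2 * cos (π * (a.1 + a.2))) (π * (a.2 - a.1)) := by
  rw [Xmap_eq_trigSum, ← trigSum_eq_deltoidParam]
  congr 1 <;> ring

lemma exists_deltoidParam_eq (y : ℝ × ℝ) : ∃ μ t, deltoidParam μ t = y := by
  set f : ℝ → ℝ := fun t ↦ sin (3 * t) - y.1 * sin t - y.2 * cos t
  -- `f (t + π) = -f t`, so `f` changes sign on `[0, π]`
  have hf : ContinuousOn f (uIcc 0 π) := by fun_prop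
  have hf₀ : f 0 = -y.2 := by simp [f]
  have hfπ : f π = y.2 := by simp [f, sin_three_mul]
  have hsign : (0 : ℝ) ∈ uIcc (f 0) (f π) := by
    rw [hf₀, hfπ, mem_uIcc]
    rcases le_total 0 y.2 with h | h
    exacts [Or.inl ⟨by linarith, h⟩, Or.inr ⟨h, by linarith⟩]
  obtain ⟨t, -, ht⟩ := intermediate_value_uIcc hf hsign
  have ht : sin (3 * t) - y.1 * sin t - y.2 * cos t = 0 := ht
  have hpy := sin_sq_add_cos_sq t
  refine ⟨y.1 * cos t - y.2 * sin t - cos (3 * t), t, ?_⟩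
  rw [deltoidParam, show 2 * t = 3 * t - t by ring, cos_sub, sin_sub, Prod.ext_iff]
  constructor
  · linear_combination sin t * ht + y.1 * hpy
  · linear_combination cos t * ht + y.2 * hpy

def deltoidPoly (y : ℝ × ℝ) : ℝ :=
  -(y.1 ^ 2 + y.2 ^ 2 + 9) ^ 2 + 8 * (y.1 ^ 3 - 3 * y.1 * y.2 ^ 2) + 108

lemma deltoidPoly_deltoidParam (μ t : ℝ) :
    deltoidPoly (deltoidParam μ t) = (4 - μ ^ 2) * (2 * cos (3 * t) - μ) ^ 2 := by
  -- only `y.2 ^ 2` occurs in `deltoidPoly`, so `sin t` can be eliminated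
  have hy₂ : (sin (2 * t) - μ * sin t) ^ 2 = (1 - cos t ^ 2) * (2 * cos t - μ) ^ 2 := by
    rw [sin_two_mul, ← sin_sq]
    ring
  simp only [deltoidPoly, deltoidParam]
  rw [hy₂, cos_two_mul, cos_three_mul]
  ring

lemma deltoidPoly_deltoidParam_nonneg_iff (μ t : ℝ) :
    0 ≤ deltoidPoly (deltoidParam μ t) ↔ μ ^ 2 ≤ 4 := by
  rw [deltoidPoly_deltoidParam]
  refine ⟨fun h ↦ ?_, fun h ↦ mul_nonneg (by linarith) (sq_nonneg _)⟩
  by_contra! hμ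
  have hD : (2 * cos (3 * t) - μ) ^ 2 = 0 := by nlinarith [sq_nonneg (2 * cos (3 * t) - μ)]
  have hμ_eq : μ = 2 * cos (3 * t) := by linarith [pow_eq_zero_iff two_ne_zero |>.1 hD]
  nlinarith [cos_sq_le_one (3 * t)]

/-- The image of the fundamental domain `T` of `A₂` under the
`X`-transform is the region `Ω` bounded by the zero locus of `K`. -/
theorem Xmap_image_eq_Omega :
    Xmap '' T =
      {y : ℝ × ℝ |
        0 ≤ -(y.1 ^ 2 + y.2 ^ 2 + 9) ^ 2 + 8 * (y.1 ^ 3 - 3 * y.1 * y.2 ^ 2) + 108} := by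
  ext y
  constructor
  · rintro ⟨a, -, rfl⟩
    change 0 ≤ deltoidPoly (Xmap a)
    rw [Xmap_eq_deltoidParam, deltoidPoly_deltoidParam_nonneg_iff]
    nlinarith [cos_sq_le_one (π * (a.1 + a.2))]
  · intro hy
    obtain ⟨μ, t, rfl⟩ := exists_deltoidParam_eq y
    have hμ : μ ^ 2 ≤ 4 := (deltoidPoly_deltoidParam_nonneg_iff μ t).1 hy
    obtain ⟨ψ, rfl⟩ : ∃ ψ, μ = 2 * cos ψ :=
      ⟨arccos (μ / 2), by rw [cos_arccos] <;> nlinarith⟩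
    obtain ⟨a, ha, hXa⟩ :=
      exists_mem_T_Xmap_eq_trigSum (θ₁ := ψ - t) (θ₂ := 2 * t) (θ₃ := -ψ - t) (by ring)
    exact ⟨a, ha, hXa.trans (trigSum_eq_deltoidParam ψ t)⟩

end
end
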